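/- There exist a finite connected non-complete graph G₁ that is not super connected and a finite disconnected graph G₂ with at least one isolated vertex such that the lexicographic product G₁∘G₂ is not super connected. Specifically, one may take G₁ to be the graph on vertices {x₁,x₂,x₃,x₄,x₅} with edges {x₁x₂, x₁x₃, x₂x₃, x₂x₄, x₂x₅, x₄x₅}, and G₂ the graph on vertices {y₁,y₂,y₃} with the single edge y₁y₂ (so y₃ is isolated); then the set {(x₂,y₁), (x₂,y₂), (x₂,y₃)} is a minimum vertex-cut of G₁∘G₂ that isolates no vertex. -/

import Mathlib

/-- The lexicographic product of two simple graphs: `(x₁,y₁)` is adjacent to `(x₂,y₂)`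
iff `x₁x₂` is an edge of `G`, or `x₁ = x₂` and `y₁y₂` is an edge of `H`. -/
def lexProd {V W : Type*} (G : SimpleGraph V) (H : SimpleGraph W) :
    SimpleGraph (V × W) where
  Adj p q := G.Adj p.1 q.1 ∨ (p.1 = q.1 ∧ H.Adj p.2 q.2)
  symm := by
    constructor
    rintro ⟨x₁, y₁⟩ ⟨x₂, y₂⟩ (h | ⟨rfl, h⟩)
    · exact Or.inl h.symm
    · exact Or.inr ⟨rfl, h.symm⟩
  loopless := by
    constructor
    rintro ⟨x, y⟩ (h | ⟨-, h⟩)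
    · exact G.loopless.irrefl x h
    · exact H.loopless.irrefl y h

/-- The set `V₀(G)` of isolated vertices of `G`. -/
def isoSet {V : Type*} (G : SimpleGraph V) : Set V := {v | ∀ w, ¬ G.Adj v w}

/-- The set of vertices of `G − S` that are isolated in `G − S`,
i.e. `V₀(G − S)` regarded as a subset of the vertices of `G`. -/
def isolatedAfter {V : Type*} (G : SimpleGraph V) (S : Set V) : Set V :=
  {v | v ∉ S ∧ ∀ w ∉ S, ¬ G.Adj v w}

/-- `S` is a vertex-cut of `G`: deleting `S` leaves a disconnected graph, or reduces `G`
to the trivial one-vertex graph `K₁`. -/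
def IsVertexCut {V : Type*} (G : SimpleGraph V) (S : Set V) : Prop :=
  (Sᶜ.Nonempty ∧ ¬ (G.induce Sᶜ).Connected) ∨ (∃ v, Sᶜ = {v})

/-- The connectivity `κ(G)`: the minimum cardinality of a vertex-cut of `G`. -/
noncomputable def graphConnectivity {V : Type*} (G : SimpleGraph V) : ℕ :=
  sInf {n | ∃ S : Set V, IsVertexCut G S ∧ S.ncard = n}

/-- A minimum vertex-cut: a vertex-cut of cardinality `κ(G)`. -/
def IsMinVertexCut {V : Type*} (G : SimpleGraph V) (S : Set V) : Prop :=
  IsVertexCut G S ∧ S.ncard = graphConnectivity G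

/-- A k₁-vertex-cut: a vertex-cut `S` such that `G − S` has no isolated vertices. -/
def IsK1VertexCut {V : Type*} (G : SimpleGraph V) (S : Set V) : Prop :=
  IsVertexCut G S ∧ ∀ v ∉ S, ∃ w ∉ S, G.Adj v w

/-- The k₁-connectivity `k₁(G)`, valued in `ℕ∞`; it is `⊤` (infinity) if `G`
has no k₁-vertex-cut. -/
noncomputable def k1Connectivity {V : Type*} (G : SimpleGraph V) : ℕ∞ :=
  sInf {n : ℕ∞ | ∃ S : Set V, IsK1VertexCut G S ∧ (S.ncard : ℕ∞) = n}

/-- `G` is super connected if every minimum vertex-cut isolates a vertex,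
i.e. some vertex of `G − S` has no neighbours in `G − S`. -/
def SuperConnected {V : Type*} (G : SimpleGraph V) : Prop :=
  ∀ S : Set V, IsMinVertexCut G S → ∃ v ∉ S, ∀ w ∉ S, ¬ G.Adj v w

/-- The graph on `{x₁, …, x₅}` (here `0, …, 4`) with edges
`x₁x₂, x₁x₃, x₂x₃, x₂x₄, x₂x₅, x₄x₅`. -/
def Gex₁ : SimpleGraph (Fin 5) :=
  SimpleGraph.fromRel (fun a b =>
    (a = 0 ∧ b = 1) ∨ (a = 0 ∧ b = 2) ∨ (a = 1 ∧ b = 2) ∨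
    (a = 1 ∧ b = 3) ∨ (a = 1 ∧ b = 4) ∨ (a = 3 ∧ b = 4))

/-- The graph on `{y₁, y₂, y₃}` (here `0, 1, 2`) with the single edge `y₁y₂`,
so `y₃` is isolated. -/
def Gex₂ : SimpleGraph (Fin 3) :=
  SimpleGraph.fromRel (fun a b => a = 0 ∧ b = 1)

/-!
The vertex `x₂` of `G₁` is adjacent to every other vertex, and `G₁ − x₂` splits into the two
edges `x₁x₃` and `x₄x₅`, so `{x₂}` is a minimum vertex-cut isolating no vertex.
In `G₁∘G₂` the fibre `{x₂} × V(G₂)` plays the same role: deleting fewer than `|V(G₂)|` vertices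
spares some copy `(x₂, y)` of the universal vertex and some vertex `(x, z)` with `x ≠ x₂`,
and every surviving vertex reaches `(x₂, y)` directly or through `(x, z)`. Hence this fibre is a
minimum vertex-cut, and the isolated-vertex-free components of `G₁ − x₂` survive in the product.
-/

namespace SimpleGraph

variable {V : Type*} {G : SimpleGraph V}

theorem Reachable.iff_of_forall_adj {P : V → Prop} (hP : ∀ a b, G.Adj a b → (P a ↔ P b))
    {a b : V} (h : G.Reachable a b) : P a ↔ P b := by
  replace h := (reachable_iff_reflTransGen a b).1 h
  induction h with
  | refl => rfl
  | tail _ hadj ih => exact ih.trans (hP _ _ hadj)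

theorem Reachable.map_of_adj_or_eq {V' : Type*} {G' : SimpleGraph V'} (f : V → V')
    (hf : ∀ a b, G.Adj a b → G'.Adj (f a) (f b) ∨ f a = f b) {a b : V} (h : G.Reachable a b) :
    G'.Reachable (f a) (f b) := by
  replace h := (reachable_iff_reflTransGen a b).1 h
  induction h with
  | refl => rfl
  | tail _ hadj ih =>
    rcases hf _ _ hadj with hadj' | heq
    · exact ih.trans hadj'.reachable
    · exact heq ▸ ih

theorem not_connected_of_forall_not_adj {v w : V} (hv : ∀ u, ¬ G.Adj v u) (hvw : v ≠ w) :
    ¬ G.Connected := fun h =>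
  hvw (((h.preconnected v w).iff_of_forall_adj (P := (· = v)) fun a b hab =>
    ⟨fun ha => (hv b (ha ▸ hab)).elim, fun hb => (hv a (hb ▸ hab.symm)).elim⟩).1 rfl).symm

theorem connected_of_forall_adj {u : V} (hu : ∀ v, v ≠ u → G.Adj u v) : G.Connected := by
  refine (connected_iff_exists_forall_reachable G).2 ⟨u, fun v => ?_⟩
  by_cases h : v = u
  · exact h ▸ Reachable.refl _
  · exact (hu v h).reachable

end SimpleGraph

section VertexCut

variable {V : Type*} {G : SimpleGraph V}

lemma not_isVertexCut_of_connected {S : Set V} (hc : (G.induce Sᶜ).Connected) {a b : V}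
    (ha : a ∉ S) (hb : b ∉ S) (hab : a ≠ b) : ¬ IsVertexCut G S := by
  rintro (⟨-, hnc⟩ | ⟨v, hv⟩)
  · exact hnc hc
  · have ha' : a ∈ Sᶜ := ha
    have hb' : b ∈ Sᶜ := hb
    rw [hv] at ha' hb'
    exact hab (ha'.trans hb'.symm)

lemma isMinVertexCut_of_forall_ncard_le {S : Set V} (hS : IsVertexCut G S)
    (hmin : ∀ T, IsVertexCut G T → S.ncard ≤ T.ncard) : IsMinVertexCut G S :=
  ⟨hS, le_antisymm (le_csInf ⟨_, S, hS, rfl⟩ (by rintro _ ⟨T, hT, rfl⟩; exact hmin T hT))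
    (Nat.sInf_le ⟨S, hS, rfl⟩)⟩

lemma not_superConnected_of_isMinVertexCut {S : Set V} (hS : IsMinVertexCut G S)
    (h : ∀ v ∉ S, ∃ w ∉ S, G.Adj v w) : ¬ SuperConnected G := fun hsc =>
  let ⟨v, hv, hiso⟩ := hsc S hS
  let ⟨w, hw, hadj⟩ := h v hv
  hiso w hw hadj

lemma isMinVertexCut_singleton_of_forall_adj [Finite V] {u : V}
    (hu : ∀ v, v ≠ u → G.Adj u v) (hne : ({u}ᶜ : Set V).Nonempty)
    (hdis : ¬ (G.induce {u}ᶜ).Connected) : IsMinVertexCut G {u} := by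
  refine isMinVertexCut_of_forall_ncard_le (Or.inl ⟨hne, hdis⟩) fun T hT => ?_
  rw [Set.ncard_singleton, Nat.one_le_iff_ne_zero]
  intro h0
  obtain rfl : T = ∅ := (Set.ncard_eq_zero T.toFinite).1 h0
  have hc : (G.induce (∅ : Set V)ᶜ).Connected :=
    SimpleGraph.connected_of_forall_adj (u := ⟨u, Set.notMem_empty u⟩)
      fun v hv => hu v (fun h => hv (Subtype.ext h))
  exact not_isVertexCut_of_connected hc (Set.notMem_empty u) (Set.notMem_empty _)
    (Ne.symm hne.some_mem) hT

end VertexCut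

section LexProd

variable {V W : Type*} {G : SimpleGraph V} {H : SimpleGraph W}

lemma mem_compl_of_mem_compl_prod_univ {S : Set V} {p : V × W}
    (hp : p ∈ (S ×ˢ Set.univ)ᶜ) : p.1 ∈ Sᶜ :=
  fun h => hp ⟨h, Set.mem_univ _⟩

lemma reachable_induce_of_reachable_induce_lexProd {S : Set V} {p q : ↥(S ×ˢ Set.univ)ᶜ}
    (h : ((lexProd G H).induce (S ×ˢ Set.univ)ᶜ).Reachable p q) :
    (G.induce Sᶜ).Reachable ⟨p.1.1, mem_compl_of_mem_compl_prod_univ p.2⟩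
      ⟨q.1.1, mem_compl_of_mem_compl_prod_univ q.2⟩ :=
  h.map_of_adj_or_eq (G' := G.induce Sᶜ)
    (fun p => ⟨p.1.1, mem_compl_of_mem_compl_prod_univ p.2⟩) <| by
    rintro a b (hadj | ⟨heq, -⟩)
    exacts [Or.inl hadj, Or.inr (Subtype.ext heq)]

lemma isVertexCut_lexProd_prod_univ [Nonempty W] {S : Set V} (hne : Sᶜ.Nonempty)
    (hdis : ¬ (G.induce Sᶜ).Connected) : IsVertexCut (lexProd G H) (S ×ˢ Set.univ) := by
  obtain ⟨y⟩ := ‹Nonempty W›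
  have hmem {a : V} (ha : a ∈ Sᶜ) : (a, y) ∈ (S ×ˢ Set.univ)ᶜ := fun h => ha h.1
  refine Or.inl ⟨⟨_, hmem hne.some_mem⟩, fun hc => hdis ?_⟩
  have : Nonempty ↥Sᶜ := hne.to_subtype
  exact ⟨fun a b => reachable_induce_of_reachable_induce_lexProd
    (hc.preconnected ⟨_, hmem a.2⟩ ⟨_, hmem b.2⟩)⟩

lemma ncard_singleton_prod_univ (a : V) :
    (({a} : Set V) ×ˢ (Set.univ : Set W)).ncard = Nat.card W := by
  rw [Set.ncard_prod, Set.ncard_singleton, Set.ncard_univ, one_mul]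

lemma exists_prod_notMem_of_ncard_lt [Finite V] [Finite W] {T : Set (V × W)}
    (hT : T.ncard < Nat.card W) (a : V) : ∃ y, (a, y) ∉ T := by
  rw [← ncard_singleton_prod_univ a] at hT
  obtain ⟨⟨a', y⟩, ⟨rfl, -⟩, hy⟩ := Set.exists_mem_notMem_of_ncard_lt_ncard hT
  exact ⟨y, hy⟩

lemma not_isVertexCut_lexProd_of_ncard_lt [Finite V] [Finite W] {u x : V}
    (hu : ∀ v, v ≠ u → G.Adj u v) (hx : x ≠ u) {T : Set (V × W)}
    (hT : T.ncard < Nat.card W) : ¬ IsVertexCut (lexProd G H) T := by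
  obtain ⟨y, hy⟩ := exists_prod_notMem_of_ncard_lt hT u
  obtain ⟨z, hz⟩ := exists_prod_notMem_of_ncard_lt hT x
  have hux : ((lexProd G H).induce Tᶜ).Adj ⟨(u, y), hy⟩ ⟨(x, z), hz⟩ := Or.inl (hu x hx)
  refine not_isVertexCut_of_connected
    ((SimpleGraph.connected_iff_exists_forall_reachable _).2 ⟨⟨(u, y), hy⟩, ?_⟩)
    hy hz (fun h => hx (congrArg Prod.fst h).symm)
  rintro ⟨⟨a, b⟩, hab⟩
  by_cases ha : a = u
  · subst ha
    -- `(u, b)` is not adjacent to `(u, y)` in general; go round through `(x, z)`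
    have hxu : ((lexProd G H).induce Tᶜ).Adj ⟨(x, z), hz⟩ ⟨(a, b), hab⟩ := Or.inl (hu x hx).symm
    exact hux.reachable.trans hxu.reachable
  · exact SimpleGraph.Adj.reachable (Or.inl (hu a ha))

lemma isMinVertexCut_lexProd_singleton_prod_univ [Finite V] [Finite W] [Nonempty W] {u : V}
    (hu : ∀ v, v ≠ u → G.Adj u v) (hne : ({u}ᶜ : Set V).Nonempty)
    (hdis : ¬ (G.induce {u}ᶜ).Connected) :
    IsMinVertexCut (lexProd G H) ({u} ×ˢ Set.univ) := by
  refine isMinVertexCut_of_forall_ncard_le (isVertexCut_lexProd_prod_univ hne hdis)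
    fun T hT => ?_
  rw [ncard_singleton_prod_univ]
  exact not_lt.1 fun h => not_isVertexCut_lexProd_of_ncard_lt hu hne.some_mem h hT

lemma exists_adj_lexProd_of_exists_adj {S : Set V} (h : ∀ v ∉ S, ∃ w ∉ S, G.Adj v w) :
    ∀ p ∉ S ×ˢ Set.univ, ∃ q ∉ S ×ˢ Set.univ, (lexProd G H).Adj p q := by
  rintro ⟨a, b⟩ hp
  obtain ⟨w, hw, hadj⟩ := h a fun ha => hp ⟨ha, Set.mem_univ b⟩
  exact ⟨(w, b), fun hq => hw hq.1, Or.inl hadj⟩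

end LexProd

instance : DecidableRel Gex₁.Adj := inferInstanceAs (DecidableRel (SimpleGraph.fromRel _).Adj)

instance : DecidableRel Gex₂.Adj := inferInstanceAs (DecidableRel (SimpleGraph.fromRel _).Adj)

lemma gex₁_adj_one : ∀ v, v ≠ 1 → Gex₁.Adj 1 v := by decide

lemma gex₁_ne_top : Gex₁ ≠ ⊤ := fun h =>
  (by decide : ¬ Gex₁.Adj 0 3) (h ▸ (SimpleGraph.top_adj 0 3).2 (by decide))

lemma gex₁_induce_not_connected : ¬ (Gex₁.induce {1}ᶜ).Connected := by
  -- `v < 3` separates the components `{x₁, x₃}` and `{x₄, x₅}` of `Gex₁ − x₂`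
  have hsplit : ∀ a b : Fin 5, a ≠ 1 → b ≠ 1 → Gex₁.Adj a b → (a < 3 ↔ b < 3) := by decide
  intro hc
  have := (hc.preconnected ⟨0, by decide⟩ ⟨3, by decide⟩).iff_of_forall_adj
    (P := fun v : ↥({1}ᶜ : Set (Fin 5)) => v.1 < 3) fun a b hab => hsplit a b a.2 b.2 hab
  exact absurd this (by decide)

lemma gex₁_exists_adj : ∀ v ∉ ({1} : Set (Fin 5)), ∃ w ∉ ({1} : Set (Fin 5)), Gex₁.Adj v w := by
  simp only [Set.mem_singleton_iff]
  decide

lemma gex₂_two_isolated : ∀ w, ¬ Gex₂.Adj 2 w := by decide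

/-- A connected non-complete graph G₁ that is not super connected, and a disconnected
graph G₂ with an isolated vertex, such that G₁∘G₂ is not super connected: the set
`{(x₂,y₁), (x₂,y₂), (x₂,y₃)} = {x₂} × V(G₂)` is a minimum vertex-cut of G₁∘G₂ that
isolates no vertex. -/
theorem example_not_superConnected :
    Gex₁.Connected ∧ Gex₁ ≠ ⊤ ∧ ¬ SuperConnected Gex₁ ∧
    ¬ Gex₂.Connected ∧ (isoSet Gex₂).Nonempty ∧
    IsMinVertexCut (lexProd Gex₁ Gex₂) ({1} ×ˢ (Set.univ : Set (Fin 3))) ∧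
    (∀ v ∉ ({1} ×ˢ (Set.univ : Set (Fin 3)) : Set (Fin 5 × Fin 3)),
      ∃ w ∉ ({1} ×ˢ (Set.univ : Set (Fin 3)) : Set (Fin 5 × Fin 3)),
        (lexProd Gex₁ Gex₂).Adj v w) ∧
    ¬ SuperConnected (lexProd Gex₁ Gex₂) := by
  have hne : ({1}ᶜ : Set (Fin 5)).Nonempty := ⟨0, by decide⟩
  have hcut₁ : IsMinVertexCut Gex₁ {1} :=
    isMinVertexCut_singleton_of_forall_adj gex₁_adj_one hne gex₁_induce_not_connected
  have hcut : IsMinVertexCut (lexProd Gex₁ Gex₂) ({1} ×ˢ Set.univ) :=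
    isMinVertexCut_lexProd_singleton_prod_univ gex₁_adj_one hne gex₁_induce_not_connected
  have hnoiso := exists_adj_lexProd_of_exists_adj (H := Gex₂) gex₁_exists_adj
  exact ⟨SimpleGraph.connected_of_forall_adj gex₁_adj_one, gex₁_ne_top,
    not_superConnected_of_isMinVertexCut hcut₁ gex₁_exists_adj,
    SimpleGraph.not_connected_of_forall_not_adj gex₂_two_isolated (by decide : (2 : Fin 3) ≠ 0),
    ⟨2, gex₂_two_isolated⟩, hcut, hnoiso, not_superConnected_of_isMinVertexCut hcut hnoiso⟩
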